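/- arXiv:2003.06850 — 10 statements merged into one kernel-verified Lean document; each statement's English description precedes it below -/
import Mathlib

section
/- For real numbers θ_i < θ_j < θ_k, one has sinh³(θ_k−θ_i)·cosh(θ_i) − sinh³(θ_k−θ_j)·cosh(θ_j) > 0. -/
/-!
Write `sinh³(c - θ) cosh θ = sinh²(c - θ) · (sinh(c - θ) cosh θ)`. On `θ ≤ c` both factors are
nonnegative and strictly decreasing in `θ`: the first because `sinh` is increasing and nonnegative
on `[0, ∞)`, the second because the product formula turns it into
`(sinh c + sinh (c - 2θ)) / 2`.
-/

open Real

lemma Real.two_mul_sinh_mul_cosh (x y : ℝ) :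
    2 * sinh x * cosh y = sinh (x + y) + sinh (x - y) := by
  rw [sinh_add, sinh_sub]
  ring

lemma strictAnti_sinh_sub_mul_cosh (c : ℝ) : StrictAnti fun θ => sinh (c - θ) * cosh θ := by
  intro a b hab
  have key (θ : ℝ) : sinh (c - θ) * cosh θ = (sinh c + sinh (c - 2 * θ)) / 2 := by
    have h := Real.two_mul_sinh_mul_cosh (c - θ) θ
    rw [sub_add_cancel, sub_sub, ← two_mul] at h
    linarith
  simp only [key]
  gcongr
  exact sinh_strictMono (by linarith)

lemma strictAntiOn_sinh_sub_pow_three_mul_cosh (c : ℝ) :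
    StrictAntiOn (fun θ => sinh (c - θ) ^ 3 * cosh θ) (Set.Iic c) := by
  intro a _ b hb hab
  have hb_nonneg : 0 ≤ sinh (c - b) := sinh_nonneg_iff.2 (sub_nonneg.2 hb)
  have hsinh : sinh (c - b) < sinh (c - a) := sinh_strictMono (by linarith)
  have hsq : sinh (c - b) ^ 2 < sinh (c - a) ^ 2 := pow_lt_pow_left₀ hsinh hb_nonneg two_ne_zero
  have hprod := strictAnti_sinh_sub_mul_cosh c hab
  calc sinh (c - b) ^ 3 * cosh b
      = sinh (c - b) ^ 2 * (sinh (c - b) * cosh b) := by ring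
    _ < sinh (c - a) ^ 2 * (sinh (c - a) * cosh a) :=
        mul_lt_mul'' hsq hprod (by positivity) (mul_nonneg hb_nonneg (cosh_pos b).le)
    _ = sinh (c - a) ^ 3 * cosh a := by ring

theorem stmt1 (θi θj θk : ℝ) (h1 : θi < θj) (h2 : θj < θk) :
    (Real.sinh (θk - θi))^3 * Real.cosh θi - (Real.sinh (θk - θj))^3 * Real.cosh θj > 0 :=
  sub_pos.2 <| strictAntiOn_sinh_sub_pow_three_mul_cosh θk (h1.trans h2).le h2.le h1
end

section
/- If −π/6 < θ_k < θ_i < θ_j < π/6, then sin³(θ_j−θ_k)·cos(θ_j) − sin³(θ_i−θ_k)·cos(θ_i) > 0. -/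
/-!
With `f θ = sin³(θ - c) · cos θ` one has
`f' θ = sin²(θ - c) · (2 cos(θ - c) cos θ + cos(2θ - c))`, after writing
`3 cos(θ - c) cos θ - sin(θ - c) sin θ = 2 cos(θ - c) cos θ + cos((θ - c) + θ)`.
For `c < θ < π/4 + c/2` (and `-π/2 ≤ c`) all three cosines have their argument in
`(-π/2, π/2)`, so `f` is strictly increasing on `[c, π/4 + c/2]`. For `c = θk > -π/6`
this interval contains `[θk, π/6]`, which gives `f θi < f θj`.
-/

open Real Set

theorem hasDerivAt_sin_sub_pow_three_mul_cos (c x : ℝ) :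
    HasDerivAt (fun θ => sin (θ - c) ^ 3 * cos θ)
      (sin (x - c) ^ 2 * (2 * cos (x - c) * cos x + cos (2 * x - c))) x := by
  refine ((((hasDerivAt_id x).sub_const c).sin.pow 3).mul (hasDerivAt_cos x)).congr_deriv ?_
  rw [show 2 * x - c = (x - c) + x by ring, cos_add]
  simp only [id, Pi.pow_apply]
  ring

theorem strictMonoOn_sin_sub_pow_three_mul_cos {c : ℝ} (hc : -(π / 2) ≤ c) :
    StrictMonoOn (fun θ => sin (θ - c) ^ 3 * cos θ) (Icc c (π / 4 + c / 2)) := by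
  apply strictMonoOn_of_deriv_pos (convex_Icc _ _) (by fun_prop)
  intro x hx
  rw [interior_Icc] at hx
  obtain ⟨hcx, hx⟩ := hx
  rw [(hasDerivAt_sin_sub_pow_three_mul_cos c x).deriv]
  have hsin : 0 < sin (x - c) := sin_pos_of_pos_of_lt_pi (by linarith) (by linarith)
  have hcos_sub : 0 < cos (x - c) := cos_pos_of_mem_Ioo ⟨by linarith, by linarith⟩
  have hcos : 0 < cos x := cos_pos_of_mem_Ioo ⟨by linarith, by linarith⟩
  have hcos_two_mul_sub : 0 < cos (2 * x - c) := cos_pos_of_mem_Ioo ⟨by linarith, by linarith⟩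
  positivity

theorem stmt2 (θk θi θj : ℝ) (hlb : -(Real.pi/6) < θk) (h1 : θk < θi) (h2 : θi < θj)
    (hub : θj < Real.pi/6) :
    (Real.sin (θj - θk))^3 * Real.cos θj - (Real.sin (θi - θk))^3 * Real.cos θi > 0 := by
  have hmono := strictMonoOn_sin_sub_pow_three_mul_cos (c := θk) (by linarith [pi_pos])
  have hlt := hmono ⟨h1.le, by linarith⟩ ⟨by linarith, by linarith⟩ h2
  exact sub_pos.mpr hlt
end

section
/- Let m_1, ..., m_n > 0 and define I : (S²)ⁿ → ℝ by I(q) = Σ_i m_i (x_i² + y_i²), where q_i = (x_i, y_i, z_i) ∈ S². Then the set of critical values of I is exactly {Σ_i ε_i m_i : ε_i ∈ {0,1}}. -/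
open Real Finset

/-- Criticality of `q ↦ mᵢ(xᵢ² + yᵢ²)` on the sphere at `qᵢ`:
the gradient `(2mᵢxᵢ, 2mᵢyᵢ, 0)` is parallel to `qᵢ`. -/
def IsCritI (n : ℕ) (m : Fin n → ℝ) (q : Fin n → ℝ × ℝ × ℝ) : Prop :=
  ∀ i, ∃ t : ℝ, (2 * m i * (q i).1, 2 * m i * (q i).2.1, (0 : ℝ)) = t • (q i)

/-! The problem decouples over the factors: on a single sphere the Lagrange condition
`(2c x, 2c y, 0) = t (x, y, z)` forces either `t = 0` (then `c x = c y = 0`, value `0`) or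
`z = 0` (then `x² + y² = 1`, value `c`); the poles and the equator realise both values. -/

theorem exists_eq_zero_or_one_of_crit {c t : ℝ} {p : ℝ × ℝ × ℝ}
    (hp : p.1 ^ 2 + p.2.1 ^ 2 + p.2.2 ^ 2 = 1)
    (hcrit : (2 * c * p.1, 2 * c * p.2.1, (0 : ℝ)) = t • p) :
    ∃ ε : ℝ, (ε = 0 ∨ ε = 1) ∧ c * (p.1 ^ 2 + p.2.1 ^ 2) = ε * c := by
  simp only [Prod.ext_iff, Prod.smul_fst, Prod.smul_snd, smul_eq_mul] at hcrit
  obtain ⟨hx, hy, hz⟩ := hcrit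
  rcases mul_eq_zero.mp hz.symm with rfl | hz0
  · refine ⟨0, Or.inl rfl, ?_⟩
    linear_combination (p.1 / 2) * hx + (p.2.1 / 2) * hy
  · refine ⟨1, Or.inr rfl, ?_⟩
    rw [hz0] at hp
    linear_combination c * hp

theorem exists_crit_of_eq_zero_or_one (c : ℝ) {ε : ℝ} (hε : ε = 0 ∨ ε = 1) :
    ∃ p : ℝ × ℝ × ℝ, p.1 ^ 2 + p.2.1 ^ 2 + p.2.2 ^ 2 = 1 ∧
      (∃ t : ℝ, (2 * c * p.1, 2 * c * p.2.1, (0 : ℝ)) = t • p) ∧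
      c * (p.1 ^ 2 + p.2.1 ^ 2) = ε * c := by
  rcases hε with rfl | rfl
  · exact ⟨(0, 0, 1), by norm_num, ⟨0, by simp⟩, by simp⟩
  · exact ⟨(1, 0, 0), by norm_num, ⟨2 * c, by simp⟩, by simp⟩

theorem stmt8_general (n : ℕ) (m : Fin n → ℝ) :
    {v : ℝ | ∃ q : Fin n → ℝ × ℝ × ℝ,
        (∀ i, (q i).1^2 + (q i).2.1^2 + (q i).2.2^2 = 1) ∧
        IsCritI n m q ∧
        v = ∑ i, m i * ((q i).1^2 + (q i).2.1^2)}
      = {v : ℝ | ∃ ε : Fin n → ℝ, (∀ i, ε i = 0 ∨ ε i = 1) ∧ v = ∑ i, ε i * m i} := by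
  ext v
  constructor
  · rintro ⟨q, hsphere, hcrit, rfl⟩
    choose ε hε hvalue using fun i ↦
      exists_eq_zero_or_one_of_crit (hsphere i) (hcrit i).choose_spec
    exact ⟨ε, hε, sum_congr rfl fun i _ ↦ hvalue i⟩
  · rintro ⟨ε, hε, rfl⟩
    choose q hsphere hcrit hvalue using fun i ↦ exists_crit_of_eq_zero_or_one (m i) (hε i)
    exact ⟨q, hsphere, hcrit, sum_congr rfl fun i _ ↦ (hvalue i).symm⟩

theorem stmt8 (n : ℕ) (m : Fin n → ℝ) (hm : ∀ i, 0 < m i) :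
    {v : ℝ | ∃ q : Fin n → ℝ × ℝ × ℝ,
        (∀ i, (q i).1^2 + (q i).2.1^2 + (q i).2.2^2 = 1) ∧
        IsCritI n m q ∧
        v = ∑ i, m i * ((q i).1^2 + (q i).2.1^2)}
      = {v : ℝ | ∃ ε : Fin n → ℝ, (∀ i, ε i = 0 ∨ ε i = 1) ∧ v = ∑ i, ε i * m i} :=
  stmt8_general n m
end

section
/- Let q_1, ..., q_n ∈ ℍ³ ⊂ ℝ^{3,1} with pairwise distinct positions, written q_i = (x_i, y_i, z_i, w_i) with x_i²+y_i²+z_i²−w_i² = −1, w_i ≥ 1. Suppose q is an ordinary central configuration, i.e., for each i: Σ_{j≠i} m_i m_j (u_j − (w_j/w_i) u_i)/sinh³(d_{ij}) = 2λ m_i (x_i, y_i, 0), where u_i = (x_i, y_i, z_i), cosh(d_{ij}) = −q_i·q_j (Minkowski inner product), and not all x_i²+y_i² vanish. Then λ < 0. -/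
/-!
Dot the `i`-th central configuration equation with `wᵢ uᵢ` and sum over `i`. The right-hand
sides add up to `2λ ∑ mᵢ wᵢ (xᵢ² + yᵢ²)`, a positive multiple of `λ`. On the left, the `(i, j)`
and `(j, i)` terms combine, via `‖uᵢ‖² = wᵢ² - 1` and `uᵢ · uⱼ = wᵢ wⱼ - cosh dᵢⱼ`, to
`mᵢ mⱼ (wᵢ + wⱼ) (1 - cosh dᵢⱼ) / sinh³ dᵢⱼ < 0`.
-/

open Real Finset

theorem Finset.sum_sum_erase_neg_of_add_swap_neg {ι M : Type*} [Fintype ι] [DecidableEq ι]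
    [Nontrivial ι] [AddCommMonoid M] [LinearOrder M] [IsOrderedCancelAddMonoid M]
    (g : ι → ι → M) (hg : ∀ i j, i ≠ j → g i j + g j i < 0) :
    ∑ i, ∑ j ∈ univ.erase i, g i j < 0 := by
  have hswap : ∑ i, ∑ j ∈ univ.erase i, g j i = ∑ i, ∑ j ∈ univ.erase i, g i j :=
    Finset.sum_comm' (by simp [and_comm, eq_comm])
  have hsym : ∑ i, ∑ j ∈ univ.erase i, (g i j + g j i) < 0 :=
    Finset.sum_neg (fun i _ => Finset.sum_neg
      (fun j hj => hg i j (Finset.ne_of_mem_erase hj).symm)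
      (Finset.univ_nontrivial.erase_nonempty)) univ_nonempty
  simp only [Finset.sum_add_distrib, hswap] at hsym
  by_contra! hnonneg
  exact (add_nonneg hnonneg hnonneg).not_gt hsym

section CentralConfiguration

variable {ι : Type*} (m x y z w : ι → ℝ) (d : ι → ι → ℝ)

/-- The `j`-th term of the `i`-th central configuration equation, dotted with `wᵢ uᵢ`. -/
noncomputable def ccPairing (i j : ι) : ℝ :=
  m i * m j / sinh (d i j) ^ 3 *
    (w i * (x i * x j + y i * y j + z i * z j) - w j * (x i ^ 2 + y i ^ 2 + z i ^ 2))

theorem sum_ccPairing_eq [Fintype ι] [DecidableEq ι] (lam : ℝ) (hw : ∀ i, w i ≠ 0)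
    (hdpos : ∀ i j, i ≠ j → 0 < d i j) (i : ι)
    (hccx : ∑ j ∈ univ.erase i, m i * m j * (x j - (w j / w i) * x i) / sinh (d i j) ^ 3
      = 2 * lam * m i * x i)
    (hccy : ∑ j ∈ univ.erase i, m i * m j * (y j - (w j / w i) * y i) / sinh (d i j) ^ 3
      = 2 * lam * m i * y i)
    (hccz : ∑ j ∈ univ.erase i, m i * m j * (z j - (w j / w i) * z i) / sinh (d i j) ^ 3
      = 0) :
    ∑ j ∈ univ.erase i, ccPairing m x y z w d i j = 2 * lam * m i * w i * (x i ^ 2 + y i ^ 2) := by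
  have hterm : ∀ j ∈ univ.erase i, ccPairing m x y z w d i j =
      w i * x i * (m i * m j * (x j - (w j / w i) * x i) / sinh (d i j) ^ 3)
      + w i * y i * (m i * m j * (y j - (w j / w i) * y i) / sinh (d i j) ^ 3)
      + w i * z i * (m i * m j * (z j - (w j / w i) * z i) / sinh (d i j) ^ 3) := by
    intro j hj
    have hs : sinh (d i j) ≠ 0 :=
      (sinh_pos_iff.2 (hdpos i j (Finset.ne_of_mem_erase hj).symm)).ne'
    have := hw i
    unfold ccPairing
    field_simp
    ring
  rw [Finset.sum_congr rfl hterm, Finset.sum_add_distrib, Finset.sum_add_distrib,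
    ← Finset.mul_sum, ← Finset.mul_sum, ← Finset.mul_sum, hccx, hccy, hccz]
  ring

theorem ccPairing_add_swap (hhyp : ∀ i, x i ^ 2 + y i ^ 2 + z i ^ 2 - w i ^ 2 = -1)
    (hd : ∀ i j, i ≠ j → cosh (d i j) = -(x i * x j + y i * y j + z i * z j - w i * w j))
    (hdpos : ∀ i j, i ≠ j → 0 < d i j) {i j : ι} (hij : i ≠ j) :
    ccPairing m x y z w d i j + ccPairing m x y z w d j i
      = m i * m j / sinh (d i j) ^ 3 * ((w i + w j) * (1 - cosh (d i j))) := by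
  have hdsymm : d j i = d i j :=
    cosh_injOn (hdpos j i hij.symm).le (hdpos i j hij).le
      (by rw [hd i j hij, hd j i hij.symm]; ring)
  unfold ccPairing
  rw [hdsymm]
  linear_combination (m i * m j / sinh (d i j) ^ 3) *
    ((w i + w j) * hd i j hij - w j * hhyp i - w i * hhyp j)

theorem ccPairing_add_swap_neg (hm : ∀ i, 0 < m i) (hw : ∀ i, 0 < w i)
    (hhyp : ∀ i, x i ^ 2 + y i ^ 2 + z i ^ 2 - w i ^ 2 = -1)
    (hd : ∀ i j, i ≠ j → cosh (d i j) = -(x i * x j + y i * y j + z i * z j - w i * w j))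
    (hdpos : ∀ i j, i ≠ j → 0 < d i j) {i j : ι} (hij : i ≠ j) :
    ccPairing m x y z w d i j + ccPairing m x y z w d j i < 0 := by
  rw [ccPairing_add_swap m x y z w d hhyp hd hdpos hij]
  have hcosh : 1 < cosh (d i j) := one_lt_cosh.2 (hdpos i j hij).ne'
  have hs : 0 < sinh (d i j) := sinh_pos_iff.2 (hdpos i j hij)
  have := hm i; have := hm j; have := hw i; have := hw j
  apply mul_neg_of_pos_of_neg (by positivity)
  apply mul_neg_of_pos_of_neg (by positivity)
  linarith

end CentralConfiguration

theorem stmt10_general (n : ℕ) (hn : 2 ≤ n)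
    (m : Fin n → ℝ) (hm : ∀ i, 0 < m i)
    (x y z w : Fin n → ℝ)
    -- points lie on the hyperboloid ℍ³
    (hhyp : ∀ i, (x i)^2 + (y i)^2 + (z i)^2 - (w i)^2 = -1)
    (hw : ∀ i, 1 ≤ w i)
    -- mutual distances: cosh dᵢⱼ = −qᵢ·qⱼ (Minkowski inner product), dᵢⱼ > 0
    (d : Fin n → Fin n → ℝ)
    (hd : ∀ i j, i ≠ j →
      Real.cosh (d i j) = -(x i * x j + y i * y j + z i * z j - w i * w j))
    (hdpos : ∀ i j, i ≠ j → 0 < d i j)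
    (lam : ℝ)
    -- the central configuration equations, componentwise in u = (x, y, z)
    (hccx : ∀ i, ∑ j ∈ Finset.univ.erase i,
        m i * m j * (x j - (w j / w i) * x i) / (Real.sinh (d i j))^3
        = 2 * lam * m i * x i)
    (hccy : ∀ i, ∑ j ∈ Finset.univ.erase i,
        m i * m j * (y j - (w j / w i) * y i) / (Real.sinh (d i j))^3
        = 2 * lam * m i * y i)
    (hccz : ∀ i, ∑ j ∈ Finset.univ.erase i,
        m i * m j * (z j - (w j / w i) * z i) / (Real.sinh (d i j))^3
        = 0)
    -- ordinary: not all xᵢ² + yᵢ² vanish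
    (hord : ∃ i, (x i)^2 + (y i)^2 ≠ 0) :
    lam < 0 := by
  have : Nontrivial (Fin n) := Fin.nontrivial_iff_two_le.2 hn
  have hwpos : ∀ i, 0 < w i := fun i => one_pos.trans_le (hw i)
  have hneg : ∑ i, ∑ j ∈ univ.erase i, ccPairing m x y z w d i j < 0 :=
    Finset.sum_sum_erase_neg_of_add_swap_neg _
      (fun i j hij => ccPairing_add_swap_neg m x y z w d hm hwpos hhyp hd hdpos hij)
  have hsum : ∑ i, ∑ j ∈ univ.erase i, ccPairing m x y z w d i j
      = lam * ∑ i, 2 * m i * w i * (x i ^ 2 + y i ^ 2) := by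
    rw [Finset.mul_sum]
    refine Finset.sum_congr rfl fun i _ => ?_
    rw [sum_ccPairing_eq m x y z w d lam (fun i => (hwpos i).ne') hdpos i (hccx i) (hccy i)
      (hccz i)]
    ring
  have hmoment : 0 < ∑ i, 2 * m i * w i * (x i ^ 2 + y i ^ 2) := by
    obtain ⟨k, hk⟩ := hord
    refine Finset.sum_pos' (fun i _ => by have := hm i; have := hwpos i; positivity)
      ⟨k, mem_univ k, ?_⟩
    have := hm k; have := hwpos k
    have : 0 < x k ^ 2 + y k ^ 2 := lt_of_le_of_ne (by positivity) hk.symm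
    positivity
  exact neg_of_mul_neg_left (hsum ▸ hneg) hmoment.le

theorem stmt10 (n : ℕ) (hn : 2 ≤ n)
    (m : Fin n → ℝ) (hm : ∀ i, 0 < m i)
    (x y z w : Fin n → ℝ)
    -- points lie on the hyperboloid ℍ³
    (hhyp : ∀ i, (x i)^2 + (y i)^2 + (z i)^2 - (w i)^2 = -1)
    (hw : ∀ i, 1 ≤ w i)
    -- pairwise distinct positions
    (hdist : ∀ i j, i ≠ j → (x i, y i, z i, w i) ≠ (x j, y j, z j, w j))
    -- mutual distances: cosh dᵢⱼ = −qᵢ·qⱼ (Minkowski inner product), dᵢⱼ > 0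
    (d : Fin n → Fin n → ℝ)
    (hd : ∀ i j, i ≠ j →
      Real.cosh (d i j) = -(x i * x j + y i * y j + z i * z j - w i * w j))
    (hdpos : ∀ i j, i ≠ j → 0 < d i j)
    (lam : ℝ)
    -- the central configuration equations, componentwise in u = (x, y, z)
    (hccx : ∀ i, ∑ j ∈ Finset.univ.erase i,
        m i * m j * (x j - (w j / w i) * x i) / (Real.sinh (d i j))^3
        = 2 * lam * m i * x i)
    (hccy : ∀ i, ∑ j ∈ Finset.univ.erase i,
        m i * m j * (y j - (w j / w i) * y i) / (Real.sinh (d i j))^3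
        = 2 * lam * m i * y i)
    (hccz : ∀ i, ∑ j ∈ Finset.univ.erase i,
        m i * m j * (z j - (w j / w i) * z i) / (Real.sinh (d i j))^3
        = 0)
    -- ordinary: not all xᵢ² + yᵢ² vanish
    (hord : ∃ i, (x i)^2 + (y i)^2 ≠ 0) :
    lam < 0 :=
  stmt10_general n hn m hm x y z w hhyp hw d hd hdpos lam hccx hccy hccz hord
end

section
/- Suppose θ_1 < ... < θ_n satisfy the geodesic central configuration equations Σ_{j≠i} m_j sinh(θ_j − θ_i)/sinh³(|θ_i − θ_j|) = λ sinh(2θ_i) for all i, with m_i > 0. Define the matrix A by A_{ij} = m_j/sinh³(|θ_i−θ_j|) for i ≠ j and A_{ii} = −Σ_{j≠i} m_j cosh(θ_j)/(cosh(θ_i) sinh³(|θ_i−θ_j|)). Then the vector c₁ = (cosh θ_1, ..., cosh θ_n) satisfies A c₁ = 0, and the vector c₂ = (sinh θ_1, ..., sinh θ_n) satisfies A c₂ = 2λ c₂. -/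
open Real Finset Matrix

/-!
With `c = cosh θ`, the diagonal of `A` is chosen so that every row annihilates `c`; for such a
matrix with off-diagonal weights `w`, `(A v)ᵢ = (∑ⱼ wᵢⱼ (cᵢ vⱼ - cⱼ vᵢ)) / cᵢ`. For `v = sinh θ`
the bracket is `sinh (θⱼ - θᵢ)`, so the central configuration equation turns row `i` into
`λ sinh (2θᵢ) / cosh θᵢ = 2λ sinh θᵢ`.
-/

section WeightedLaplacian

variable {ι K : Type*} [Fintype ι] [DecidableEq ι] [Field K]

lemma Matrix.mulVec_apply_eq_diag_add_sum_erase (A : Matrix ι ι K) (v : ι → K) (i : ι) :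
    (A *ᵥ v) i = A i i * v i + ∑ j ∈ univ.erase i, A i j * v j :=
  (add_sum_erase _ (fun j => A i j * v j) (mem_univ i)).symm

lemma Matrix.mulVec_apply_of_diag_eq_neg_sum {A : Matrix ι ι K} {w c : ι → K} {i : ι}
    (hc : c i ≠ 0) (hoff : ∀ j, j ≠ i → A i j = w j)
    (hdiag : A i i = -∑ j ∈ univ.erase i, w j * c j / c i) (v : ι → K) :
    (A *ᵥ v) i = (∑ j ∈ univ.erase i, w j * (c i * v j - c j * v i)) / c i := by
  rw [mulVec_apply_eq_diag_add_sum_erase, hdiag, sum_div, neg_mul, sum_mul, neg_add_eq_sub,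
    ← sum_sub_distrib]
  refine sum_congr rfl fun j hj => ?_
  rw [hoff j (ne_of_mem_erase hj)]
  field_simp

end WeightedLaplacian

theorem stmt12_general (n : ℕ)
    (θ : Fin n → ℝ)
    (m : Fin n → ℝ) (lam : ℝ)
    (hcc : ∀ i, ∑ j ∈ Finset.univ.erase i,
        m j * Real.sinh (θ j - θ i) / (Real.sinh |θ i - θ j|)^3
        = lam * Real.sinh (2 * θ i))
    (A : Matrix (Fin n) (Fin n) ℝ)
    (hAoff : ∀ i j, i ≠ j → A i j = m j / (Real.sinh |θ i - θ j|)^3)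
    (hAdiag : ∀ i, A i i = - ∑ j ∈ Finset.univ.erase i,
        m j * Real.cosh (θ j) / (Real.cosh (θ i) * (Real.sinh |θ i - θ j|)^3)) :
    A.mulVec (fun i => Real.cosh (θ i)) = 0 ∧
    A.mulVec (fun i => Real.sinh (θ i)) = (2 * lam) • (fun i => Real.sinh (θ i)) := by
  have hcosh : ∀ i, cosh (θ i) ≠ 0 := fun i => (cosh_pos _).ne'
  have hoff : ∀ i j, j ≠ i → A i j = m j / (sinh |θ i - θ j|) ^ 3 :=
    fun i j hj => hAoff i j hj.symm
  have hdiag : ∀ i, A i i = -∑ j ∈ univ.erase i,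
      m j / (sinh |θ i - θ j|) ^ 3 * cosh (θ j) / cosh (θ i) := fun i => by
    simp only [hAdiag, div_mul_eq_mul_div, div_div, mul_comm (cosh (θ i))]
  have hrow (i : Fin n) := mulVec_apply_of_diag_eq_neg_sum (c := fun i => cosh (θ i))
    (w := fun j => m j / (sinh |θ i - θ j|) ^ 3) (hcosh i) (hoff i) (hdiag i)
  refine ⟨funext fun i => ?_, funext fun i => ?_⟩
  · simp [hrow, mul_comm]
  have hsinh : ∑ j ∈ univ.erase i, m j / (sinh |θ i - θ j|) ^ 3 *
      (cosh (θ i) * sinh (θ j) - cosh (θ j) * sinh (θ i)) = lam * sinh (2 * θ i) := by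
    rw [← hcc i]
    refine sum_congr rfl fun j _ => ?_
    rw [sinh_sub]
    ring
  rw [hrow, hsinh, sinh_two_mul, Pi.smul_apply, smul_eq_mul]
  field_simp

theorem stmt12 (n : ℕ)
    (θ : Fin n → ℝ) (hθ : StrictMono θ)
    (m : Fin n → ℝ) (hm : ∀ i, 0 < m i) (lam : ℝ)
    (hcc : ∀ i, ∑ j ∈ Finset.univ.erase i,
        m j * Real.sinh (θ j - θ i) / (Real.sinh |θ i - θ j|)^3
        = lam * Real.sinh (2 * θ i))
    (A : Matrix (Fin n) (Fin n) ℝ)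
    (hAoff : ∀ i j, i ≠ j → A i j = m j / (Real.sinh |θ i - θ j|)^3)
    (hAdiag : ∀ i, A i i = - ∑ j ∈ Finset.univ.erase i,
        m j * Real.cosh (θ j) / (Real.cosh (θ i) * (Real.sinh |θ i - θ j|)^3)) :
    A.mulVec (fun i => Real.cosh (θ i)) = 0 ∧
    A.mulVec (fun i => Real.sinh (θ i)) = (2 * lam) • (fun i => Real.sinh (θ i)) :=
  stmt12_general n θ m lam hcc A hAoff hAdiag
end

section
/- Under the hypotheses of the previous statement (geodesic central configuration on ℍ¹ with θ_1 < ... < θ_n, multiplier λ, and Σ_i m_i sinh(2θ_i) = 0), let K = {u ∈ ℝⁿ : Σ_i m_i cosh(θ_i) u_i = 0 and u_1/cosh θ_1 ≤ u_2/cosh θ_2 ≤ ... ≤ u_n/cosh θ_n}. Then for every nonzero u ∈ K, Σ_i m_i sinh(θ_i) u_i > 0. -/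
/-!
Rescale to `b i = m i cosh² θ i`, `t i = tanh θ i`, `v i = u i / cosh θ i`. Then the cone conditions
say `∑ b v = 0` with `v` monotone, `∑ m sinh(2θ) = 0` says `∑ b t = 0`, and the target sum is
`∑ b t v`. Since `t` is strictly increasing, the weighted Chebyshev sum inequality gives
`(∑ b t)(∑ b v) < (∑ b)(∑ b t v)` as soon as `v` is not constant, and `v` cannot be a nonzero
constant because `∑ b v = 0`.
-/

open Real Finset

theorem Real.tanh_strictMono : StrictMono tanh := fun x y hxy =>
  lt_of_not_ge fun h => hxy.not_ge <| by
    simpa only [artanh_tanh] using artanh_le_artanh (neg_one_lt_tanh y) (tanh_lt_one x) h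

section WeightedChebyshev

variable {ι : Type*} [Fintype ι]

theorem sum_sum_mul_sub_mul_sub {R : Type*} [CommRing R] (b t v : ι → R) :
    ∑ i, ∑ j, b i * b j * ((t i - t j) * (v i - v j)) =
      2 * ((∑ i, b i) * ∑ i, b i * t i * v i - (∑ i, b i * t i) * ∑ i, b i * v i) := by
  have hexpand : ∀ i j, b i * b j * ((t i - t j) * (v i - v j)) =
      b i * t i * v i * b j + b i * (b j * t j * v j) - b i * t i * (b j * v j) -
        b i * v i * (b j * t j) := fun i j => by ring
  simp only [hexpand, sum_add_distrib, sum_sub_distrib, ← mul_sum, ← sum_mul]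
  ring

theorem exists_lt_of_sum_mul_eq_zero {b v : ι → ℝ} (hb : ∀ i, 0 < b i)
    (hbv : ∑ i, b i * v i = 0) (hv : v ≠ 0) : ∃ i j, v i < v j := by
  obtain ⟨k, hk⟩ := Function.ne_iff.mp hv
  by_contra! hconst
  have hvk : ∀ i, v i = v k := fun i => le_antisymm (hconst k i) (hconst i k)
  have hB : 0 < ∑ i, b i := sum_pos (fun i _ => hb i) ⟨k, mem_univ k⟩
  rw [sum_congr rfl fun i _ => by rw [hvk i], ← sum_mul] at hbv
  exact mul_ne_zero hB.ne' hk hbv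

variable [LinearOrder ι]

theorem sum_mul_sum_lt_sum_mul_sum {b t v : ι → ℝ} (hb : ∀ i, 0 < b i) (ht : StrictMono t)
    (hv : Monotone v) {i j : ι} (hij : v i < v j) :
    (∑ k, b k * t k) * ∑ k, b k * v k < (∑ k, b k) * ∑ k, b k * t k * v k := by
  have hlt : i < j := hv.reflect_lt hij
  have hterm_nonneg : ∀ k l, 0 ≤ b k * b l * ((t k - t l) * (v k - v l)) := fun k l =>
    mul_nonneg (mul_pos (hb k) (hb l)).le ((ht.monotone.monovary hv).sub_mul_sub_nonneg l k)
  have hterm_pos : 0 < b i * b j * ((t i - t j) * (v i - v j)) :=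
    mul_pos (mul_pos (hb i) (hb j)) (mul_pos_of_neg_of_neg (by linarith [ht hlt]) (by linarith))
  have hdouble : 0 < ∑ k, ∑ l, b k * b l * ((t k - t l) * (v k - v l)) :=
    sum_pos' (fun k _ => sum_nonneg fun l _ => hterm_nonneg k l)
      ⟨i, mem_univ i, sum_pos' (fun l _ => hterm_nonneg i l) ⟨j, mem_univ j, hterm_pos⟩⟩
  rw [sum_sum_mul_sub_mul_sub] at hdouble
  linarith

end WeightedChebyshev

theorem stmt13_general (n : ℕ)
    (θ : Fin n → ℝ) (hθ : StrictMono θ)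
    (m : Fin n → ℝ) (hm : ∀ i, 0 < m i)
    (hsum : ∑ i, m i * Real.sinh (2 * θ i) = 0)
    (u : Fin n → ℝ) (hu : u ≠ 0)
    -- u lies in the cone K
    (hK1 : ∑ i, m i * Real.cosh (θ i) * u i = 0)
    (hK2 : ∀ i j, i ≤ j → u i / Real.cosh (θ i) ≤ u j / Real.cosh (θ j)) :
    0 < ∑ i, m i * Real.sinh (θ i) * u i := by
  set b : Fin n → ℝ := fun i => m i * cosh (θ i) ^ 2
  set t : Fin n → ℝ := fun i => tanh (θ i)
  set v : Fin n → ℝ := fun i => u i / cosh (θ i)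
  have hc : ∀ i, cosh (θ i) ≠ 0 := fun i => (cosh_pos _).ne'
  have hb : ∀ i, 0 < b i := fun i => mul_pos (hm i) (pow_pos (cosh_pos _) 2)
  have hbv : ∑ i, b i * v i = 0 := by
    rw [← hK1]; refine sum_congr rfl fun i _ => ?_
    simp only [b, v]; field_simp [hc i]
  have hbt : ∑ i, b i * t i = 0 := by
    rw [← mul_eq_zero_of_right (1 / 2 : ℝ) hsum, mul_sum]
    refine sum_congr rfl fun i _ => ?_
    simp only [b, t, tanh_eq_sinh_div_cosh, sinh_two_mul]; field_simp [hc i]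
  have hbtv : ∑ i, b i * t i * v i = ∑ i, m i * sinh (θ i) * u i := by
    refine sum_congr rfl fun i _ => ?_
    simp only [b, t, v, tanh_eq_sinh_div_cosh]; field_simp [hc i]
  have hv0 : v ≠ 0 := fun h => hu <| funext fun i => by
    simpa [v, hc i] using congrFun h i
  obtain ⟨i, j, hij⟩ := exists_lt_of_sum_mul_eq_zero hb hbv hv0
  have key := sum_mul_sum_lt_sum_mul_sum (t := t) hb (tanh_strictMono.comp hθ)
    (fun i j h => hK2 i j h) hij
  rw [hbt, hbtv, zero_mul] at key
  exact pos_of_mul_pos_right key (sum_pos (fun i _ => hb i) ⟨i, mem_univ i⟩).le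

theorem stmt13 (n : ℕ) (hn : 2 ≤ n)
    (θ : Fin n → ℝ) (hθ : StrictMono θ)
    (m : Fin n → ℝ) (hm : ∀ i, 0 < m i) (lam : ℝ)
    -- geodesic central configuration equations on ℍ¹
    (hcc : ∀ i, ∑ j ∈ Finset.univ.erase i,
        m j * Real.sinh (θ j - θ i) / (Real.sinh |θ i - θ j|)^3
        = lam * Real.sinh (2 * θ i))
    (hsum : ∑ i, m i * Real.sinh (2 * θ i) = 0)
    (u : Fin n → ℝ) (hu : u ≠ 0)
    -- u lies in the cone K
    (hK1 : ∑ i, m i * Real.cosh (θ i) * u i = 0)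
    (hK2 : ∀ i j, i ≤ j → u i / Real.cosh (θ i) ≤ u j / Real.cosh (θ j)) :
    0 < ∑ i, m i * Real.sinh (θ i) * u i :=
  stmt13_general n θ hθ m hm hsum u hu hK1 hK2
end

section
/- Fix n masses m_1, ..., m_n > 0 on ℍ¹ and consider a sequence q(l) of geodesic configurations θ_1(l) < ... < θ_n(l) satisfying the central configuration equations with multipliers λ(l), and suppose the configurations converge to a collision configuration X (some θ's coinciding in the limit) with at least one cluster of size ≥ 2. Then λ(l) → −∞. -/
/-!
Take a collision cluster and let `θ_i < θ_k` be its lowest and highest bodies. The attraction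
between two bodies of the cluster blows up like `1 / sinh² (θ_k - θ_i)` while the forces from
outside the cluster stay bounded, so the force on `θ_k` tends to `-∞` and the force on `θ_i`
to `+∞`. Hence `λ sinh 2θ_k → -∞` while `λ sinh 2θ_i > 0` eventually; as `sinh 2θ_i < sinh 2θ_k`,
this forces `λ < 0`, and since `sinh 2θ_k` stays bounded, `λ → -∞`.
-/

open Real Finset Filter

open scoped Topology

lemma exists_fiber_min_lt_max {ι β : Type*} [Fintype ι] [LinearOrder ι] (X : ι → β)
    (h : ∃ i j, i ≠ j ∧ X i = X j) :
    ∃ i k, i < k ∧ X i = X k ∧ (∀ j, X j = X i → i ≤ j) ∧ ∀ j, X j = X k → j ≤ k := by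
  classical
  obtain ⟨a, b, hab, hX⟩ := h
  set C := univ.filter (X · = X a)
  have ha : a ∈ C := mem_filter.2 ⟨mem_univ _, rfl⟩
  have hb : b ∈ C := mem_filter.2 ⟨mem_univ _, hX.symm⟩
  have hC : C.Nonempty := ⟨a, ha⟩
  have hXmin : X (C.min' hC) = X a := (mem_filter.1 (C.min'_mem hC)).2
  have hXmax : X (C.max' hC) = X a := (mem_filter.1 (C.max'_mem hC)).2
  refine ⟨C.min' hC, C.max' hC, C.min'_lt_max'_of_card (one_lt_card.2 ⟨a, ha, b, hb, hab⟩),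
    hXmin.trans hXmax.symm, fun j hj => C.min'_le j ?_, fun j hj => C.le_max' j ?_⟩
  · exact mem_filter.2 ⟨mem_univ _, hj.trans hXmin⟩
  · exact mem_filter.2 ⟨mem_univ _, hj.trans hXmax⟩

lemma tendsto_finset_sum_atBot {α ι : Type*} [DecidableEq ι] {L : Filter α} {s : Finset ι}
    {f : ι → α → ℝ} {i : ι} (hi : i ∈ s) (hf : Tendsto (f i) L atBot)
    (hbdd : ∀ j ∈ s, IsBoundedUnder (· ≤ ·) L (f j)) :
    Tendsto (fun a => ∑ j ∈ s, f j a) L atBot := by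
  obtain ⟨C, hC⟩ := isBoundedUnder_le_sum (s.erase i) fun j hj => hbdd j (mem_of_mem_erase hj)
  simp only [eventually_map, Finset.sum_apply] at hC
  refine (tendsto_atBot_add_right_of_ge' L C hf hC).congr fun a => ?_
  exact add_sum_erase s (f · a) hi

lemma tendsto_atBot_of_tendsto_mul_atBot {α : Type*} {L : Filter α} {lam s t : α → ℝ}
    (hts : ∀ᶠ a in L, t a ≤ s a) (hs : IsBoundedUnder (· ≤ ·) L s)
    (hbot : Tendsto (fun a => lam a * s a) L atBot) (htop : ∀ᶠ a in L, 0 < lam a * t a) :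
    Tendsto lam L atBot := by
  obtain ⟨B, hB⟩ := hs
  rw [eventually_map] at hB
  have hB1 : (0 : ℝ) < max B 1 := lt_max_of_lt_right one_pos
  refine tendsto_atBot_mono' L ?_ (hbot.atBot_div_const hB1)
  filter_upwards [hts, hB, htop, hbot.eventually (eventually_lt_atBot 0)] with a hta hsB hpos hneg
  have hlam : lam a < 0 := by
    by_contra! h
    nlinarith [mul_le_mul_of_nonneg_left hta h]
  rw [le_div_iff₀ hB1]
  nlinarith [le_max_left B 1]

noncomputable def forceKernel (d : ℝ) : ℝ := sinh d / sinh |d| ^ 3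

lemma forceKernel_neg (d : ℝ) : forceKernel (-d) = -forceKernel d := by
  simp only [forceKernel, sinh_neg, abs_neg, neg_div]

lemma forceKernel_of_neg {d : ℝ} (hd : d < 0) : forceKernel d = -(sinh d ^ 2)⁻¹ := by
  have hs : sinh d ≠ 0 := (sinh_neg_iff.2 hd).ne
  rw [forceKernel, abs_of_neg hd, sinh_neg]
  field_simp

lemma continuousAt_forceKernel {d : ℝ} (hd : d ≠ 0) : ContinuousAt forceKernel d := by
  have hs : sinh |d| ^ 3 ≠ 0 := pow_ne_zero _ (sinh_pos_iff.2 (abs_pos.2 hd)).ne'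
  exact continuous_sinh.continuousAt.div (by fun_prop) hs

lemma tendsto_forceKernel_nhdsLT_zero : Tendsto forceKernel (𝓝[<] 0) atBot := by
  have hsq : Tendsto (fun d => sinh d ^ 2) (𝓝[<] 0) (𝓝[>] 0) := by
    refine tendsto_nhdsWithin_iff.2 ⟨?_, ?_⟩
    · have hc : Continuous fun d => sinh d ^ 2 := by fun_prop
      exact (hc.tendsto' 0 0 (by simp)).mono_left nhdsWithin_le_nhds
    · filter_upwards [self_mem_nhdsWithin] with d hd
      exact sq_pos_of_neg (sinh_neg_iff.2 hd)
  refine (tendsto_neg_atTop_atBot.comp hsq.inv_tendsto_nhdsGT_zero).congr' ?_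
  filter_upwards [self_mem_nhdsWithin] with d hd
  exact (forceKernel_of_neg hd).symm

lemma tendsto_mul_forceKernel_atBot {α : Type*} {L : Filter α} {μ : ℝ} (hμ : 0 < μ)
    {u : α → ℝ} (hu : Tendsto u L (𝓝 0)) (hneg : ∀ᶠ a in L, u a < 0) :
    Tendsto (fun a => μ * forceKernel (u a)) L atBot :=
  (tendsto_forceKernel_nhdsLT_zero.comp (tendsto_nhdsWithin_iff.2 ⟨hu, hneg⟩)).const_mul_atBot hμ

section Force

variable {α ι : Type*} [Fintype ι] [DecidableEq ι]

noncomputable def force (m x : ι → ℝ) (i : ι) : ℝ :=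
  ∑ j ∈ univ.erase i, m j * forceKernel (x j - x i)

lemma force_neg (m x : ι → ℝ) (i : ι) : force m (-x) i = -force m x i := by
  simp only [force, ← sum_neg_distrib, ← mul_neg, ← forceKernel_neg, Pi.neg_apply, neg_sub_neg,
    neg_sub]

variable {L : Filter α} {m : ι → ℝ} {x : α → ι → ℝ} {X : ι → ℝ} {i : ι}

lemma tendsto_force_atBot (hm : ∀ j, 0 < m j) (hx : ∀ j, Tendsto (fun a => x a j) L (𝓝 (X j)))
    (hcol : ∃ j ≠ i, X j = X i) (hbelow : ∀ j ≠ i, X j = X i → ∀ᶠ a in L, x a j < x a i) :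
    Tendsto (fun a => force m (x a) i) L atBot := by
  have hdiff (j : ι) : Tendsto (fun a => x a j - x a i) L (𝓝 (X j - X i)) := (hx j).sub (hx i)
  have hcluster (j : ι) (hj : j ≠ i) (hX : X j = X i) :
      Tendsto (fun a => m j * forceKernel (x a j - x a i)) L atBot :=
    tendsto_mul_forceKernel_atBot (hm j) (by simpa [hX] using hdiff j)
      ((hbelow j hj hX).mono fun _ => sub_neg.2)
  obtain ⟨j₀, hj₀, hX₀⟩ := hcol
  refine tendsto_finset_sum_atBot (mem_erase.2 ⟨hj₀, mem_univ _⟩) (hcluster j₀ hj₀ hX₀)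
    fun j hj => ?_
  by_cases hX : X j = X i
  · exact (hcluster j (ne_of_mem_erase hj) hX).isBoundedUnder_le_atBot
  · exact (((continuousAt_forceKernel (sub_ne_zero.2 hX)).tendsto.comp (hdiff j)).const_mul
      (m j)).isBoundedUnder_le

lemma tendsto_force_atTop (hm : ∀ j, 0 < m j) (hx : ∀ j, Tendsto (fun a => x a j) L (𝓝 (X j)))
    (hcol : ∃ j ≠ i, X j = X i) (habove : ∀ j ≠ i, X j = X i → ∀ᶠ a in L, x a i < x a j) :
    Tendsto (fun a => force m (x a) i) L atTop := by
  have := tendsto_force_atBot (x := fun a => -x a) (X := -X) hm (fun j => (hx j).neg)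
    (by simpa using hcol) fun j hj hX => (habove j hj (neg_inj.1 hX)).mono fun _ => neg_lt_neg
  simpa only [force_neg, tendsto_neg_atBot_iff] using this

end Force

theorem stmt15_general (n : ℕ)
    (m : Fin n → ℝ) (hm : ∀ i, 0 < m i)
    (θ : ℕ → Fin n → ℝ) (hθ : ∀ l, StrictMono (θ l))
    (lam : ℕ → ℝ)
    -- each configuration satisfies the geodesic central configuration equations
    (hcc : ∀ l i, ∑ j ∈ Finset.univ.erase i,
        m j * Real.sinh (θ l j - θ l i) / (Real.sinh |θ l i - θ l j|)^3
        = lam l * Real.sinh (2 * θ l i))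
    -- the configurations converge to a collision configuration
    (Θ : Fin n → ℝ)
    (hconv : ∀ i, Tendsto (fun l => θ l i) atTop (nhds (Θ i)))
    (hcol : ∃ i j, i ≠ j ∧ Θ i = Θ j) :
    Tendsto lam atTop atBot := by
  obtain ⟨i, k, hik, hΘ, hmin, hmax⟩ := exists_fiber_min_lt_max Θ hcol
  have hforce (l : ℕ) (j : Fin n) : force m (θ l) j = lam l * sinh (2 * θ l j) := by
    rw [← hcc]
    refine sum_congr rfl fun j' _ => ?_
    rw [forceKernel, abs_sub_comm, mul_div_assoc]
  have hbot : Tendsto (fun l => lam l * sinh (2 * θ l k)) atTop atBot :=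
    (tendsto_force_atBot hm hconv ⟨i, hik.ne, hΘ⟩ fun j hj hX =>
      .of_forall fun l => hθ l ((hmax j hX).lt_of_ne hj)).congr (hforce · k)
  have htop : Tendsto (fun l => lam l * sinh (2 * θ l i)) atTop atTop :=
    (tendsto_force_atTop hm hconv ⟨k, hik.ne', hΘ.symm⟩ fun j hj hX =>
      .of_forall fun l => hθ l ((hmin j hX).lt_of_ne' hj)).congr (hforce · i)
  exact tendsto_atBot_of_tendsto_mul_atBot
    (.of_forall fun l => sinh_le_sinh.2 (by linarith [hθ l hik]))
    ((continuous_sinh.tendsto _).comp ((hconv k).const_mul 2)).isBoundedUnder_le hbot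
    (htop.eventually_gt_atTop 0)

theorem stmt15 (n : ℕ) (hn : 2 ≤ n)
    (m : Fin n → ℝ) (hm : ∀ i, 0 < m i)
    (θ : ℕ → Fin n → ℝ) (hθ : ∀ l, StrictMono (θ l))
    (lam : ℕ → ℝ)
    -- each configuration satisfies the geodesic central configuration equations
    (hcc : ∀ l i, ∑ j ∈ Finset.univ.erase i,
        m j * Real.sinh (θ l j - θ l i) / (Real.sinh |θ l i - θ l j|)^3
        = lam l * Real.sinh (2 * θ l i))
    -- the configurations converge to a collision configuration
    (Θ : Fin n → ℝ)
    (hconv : ∀ i, Tendsto (fun l => θ l i) atTop (nhds (Θ i)))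
    (hcol : ∃ i j, i ≠ j ∧ Θ i = Θ j) :
    Tendsto lam atTop atBot :=
  stmt15_general n m hm θ hθ lam hcc Θ hconv hcol
end

section
/- Let n = 3 and let q_1, q_2, q_3 ∈ S² ⊂ ℝ³ be a non-geodesic configuration (the three points and the origin not coplanar... i.e., q_1, q_2, q_3 linearly independent) with equal mutual spherical distances: d_{12} = d_{13} = d_{23} = d, where cos d_{ij} = q_i·q_j. Write q_i = (x_i, y_i, z_i) and suppose the central configuration conditions Σ_i m_i z_i x_i = Σ_i m_i z_i y_i = 0 and (z_1, z_2, z_3) = k(sin³ d_{23}, sin³ d_{13}, sin³ d_{12}) hold for some k ≠ 0, with m_i > 0. Then m_1 = m_2 = m_3. -/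
/-!
The three points lie on the horizontal plane `z = z₀ ≠ 0`, so the central configuration
conditions say that the weighted sum `∑ mₗ qₗ` is vertical; hence `∑ mₗ (qₗ · qᵢ)`
does not depend on `i`. For an equilateral configuration the Gram matrix is `(1 - c) I + c J` with
`c = cos d < 1`, so that sum is `(1 - c) mᵢ + c ∑ mₗ`, and the masses are equal.
-/

open Real Finset

/-- Euclidean dot product on ℝ × ℝ × ℝ. -/
def dot3 (a b : ℝ × ℝ × ℝ) : ℝ := a.1 * b.1 + a.2.1 * b.2.1 + a.2.2 * b.2.2

theorem dot3_comm (a b : ℝ × ℝ × ℝ) : dot3 a b = dot3 b a := by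
  simp only [dot3]; ring

theorem sum_mul_ite_eq_sub_mul_add {ι : Type*} [Fintype ι] [DecidableEq ι] (m : ι → ℝ)
    (r s : ℝ) (i : ι) :
    ∑ l, m l * (if l = i then r else s) = (r - s) * m i + s * ∑ l, m l := by
  have h : ∀ l, m l * (if l = i then r else s) =
      (r - s) * (if l = i then m l else 0) + s * m l := by
    intro l; split_ifs <;> ring
  simp only [h, sum_add_distrib, ← mul_sum, sum_ite_eq', mem_univ, if_true]

theorem eq_of_sum_mul_gram_eq {ι : Type*} [Fintype ι] [DecidableEq ι] {G : ι → ι → ℝ}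
    {r s : ℝ} (hG : ∀ l i, G l i = if l = i then r else s) (hrs : r ≠ s) {m : ι → ℝ}
    {i j : ι} (h : ∑ l, m l * G l i = ∑ l, m l * G l j) : m i = m j := by
  simp only [hG, sum_mul_ite_eq_sub_mul_add] at h
  exact mul_left_cancel₀ (sub_ne_zero.mpr hrs) (by linarith)

theorem sum_mul_dot3_of_horizontal {ι : Type*} [Fintype ι] {q : ι → ℝ × ℝ × ℝ} {z : ℝ}
    (hz : ∀ i, (q i).2.2 = z) (hz₀ : z ≠ 0) (m : ι → ℝ)
    (hmzx : ∑ i, m i * (q i).2.2 * (q i).1 = 0)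
    (hmzy : ∑ i, m i * (q i).2.2 * (q i).2.1 = 0) (v : ℝ × ℝ × ℝ) :
    ∑ l, m l * dot3 (q l) v = (∑ l, m l) * z * v.2.2 := by
  simp only [hz] at hmzx hmzy
  have hx : ∑ l, m l * (q l).1 = 0 := by
    simpa [mul_comm _ z, mul_assoc, ← mul_sum, hz₀] using hmzx
  have hy : ∑ l, m l * (q l).2.1 = 0 := by
    simpa [mul_comm _ z, mul_assoc, ← mul_sum, hz₀] using hmzy
  calc ∑ l, m l * dot3 (q l) v
      = (∑ l, m l * (q l).1) * v.1 + (∑ l, m l * (q l).2.1) * v.2.1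
          + (∑ l, m l) * z * v.2.2 := by
        simp only [dot3, hz, sum_mul, ← sum_add_distrib]; congr 1; ext l; ring
    _ = (∑ l, m l) * z * v.2.2 := by rw [hx, hy]; ring

theorem stmt17_general
    (q : Fin 3 → ℝ × ℝ × ℝ)
    (hunit : ∀ i, dot3 (q i) (q i) = 1)
    (m : Fin 3 → ℝ)
    -- mutual distances
    (d : Fin 3 → Fin 3 → ℝ)
    (hd : ∀ i j, i ≠ j → Real.cos (d i j) = dot3 (q i) (q j))
    (hdpos : ∀ i j, i ≠ j → 0 < d i j ∧ d i j < Real.pi)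
    -- equal mutual distances
    (heq1 : d 0 1 = d 0 2) (heq2 : d 0 2 = d 1 2)
    -- central configuration conditions
    (hmzx : ∑ i, m i * (q i).2.2 * (q i).1 = 0)
    (hmzy : ∑ i, m i * (q i).2.2 * (q i).2.1 = 0)
    (k : ℝ) (hk : k ≠ 0)
    (hz0 : (q 0).2.2 = k * (Real.sin (d 1 2))^3)
    (hz1 : (q 1).2.2 = k * (Real.sin (d 0 2))^3)
    (hz2 : (q 2).2.2 = k * (Real.sin (d 0 1))^3) :
    m 0 = m 1 ∧ m 1 = m 2 := by
  obtain ⟨hd₀, hdπ⟩ := hdpos 0 1 (by decide)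
  have hc : cos (d 0 1) ≠ 1 := fun h =>
    hd₀.ne' ((cos_eq_one_iff_of_lt_of_lt (by linarith) (by linarith)).mp h)
  have hgram : ∀ l i, dot3 (q l) (q i) = if l = i then 1 else cos (d 0 1) := by
    have h01 := hd 0 1 (by decide); have h02 := hd 0 2 (by decide)
    have h12 := hd 1 2 (by decide)
    intro l i
    fin_cases l <;> fin_cases i <;>
      simp [hunit, dot3_comm (q 2), dot3_comm (q 1) (q 0), ← h01, ← h02, ← h12, heq1, heq2]
  have hz : ∀ i, (q i).2.2 = k * sin (d 0 1) ^ 3 := by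
    intro i; fin_cases i <;> simp [hz0, hz1, hz2, heq1, heq2]
  have hz₀ : k * sin (d 0 1) ^ 3 ≠ 0 :=
    mul_ne_zero hk (pow_ne_zero 3 (sin_pos_of_pos_of_lt_pi hd₀ hdπ).ne')
  have hsum := sum_mul_dot3_of_horizontal hz hz₀ m hmzx hmzy
  have hconst : ∀ i j, ∑ l, m l * dot3 (q l) (q i) = ∑ l, m l * dot3 (q l) (q j) := by
    intro i j; rw [hsum, hsum, hz, hz]
  exact ⟨eq_of_sum_mul_gram_eq hgram (Ne.symm hc) (hconst 0 1),
    eq_of_sum_mul_gram_eq hgram (Ne.symm hc) (hconst 1 2)⟩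

theorem stmt17
    (q : Fin 3 → ℝ × ℝ × ℝ)
    (hunit : ∀ i, dot3 (q i) (q i) = 1)
    -- non-geodesic: the three points are linearly independent
    (hli : LinearIndependent ℝ q)
    (m : Fin 3 → ℝ) (hm : ∀ i, 0 < m i)
    -- mutual distances
    (d : Fin 3 → Fin 3 → ℝ)
    (hd : ∀ i j, i ≠ j → Real.cos (d i j) = dot3 (q i) (q j))
    (hdpos : ∀ i j, i ≠ j → 0 < d i j ∧ d i j < Real.pi)
    -- equal mutual distances
    (heq1 : d 0 1 = d 0 2) (heq2 : d 0 2 = d 1 2)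
    -- central configuration conditions
    (hmzx : ∑ i, m i * (q i).2.2 * (q i).1 = 0)
    (hmzy : ∑ i, m i * (q i).2.2 * (q i).2.1 = 0)
    (k : ℝ) (hk : k ≠ 0)
    (hz0 : (q 0).2.2 = k * (Real.sin (d 1 2))^3)
    (hz1 : (q 1).2.2 = k * (Real.sin (d 0 2))^3)
    (hz2 : (q 2).2.2 = k * (Real.sin (d 0 1))^3) :
    m 0 = m 1 ∧ m 1 = m 2 :=
  stmt17_general q hunit m d hd hdpos heq1 heq2 hmzx hmzy k hk hz0 hz1 hz2
end

section
/- Let q = (q_1, ..., q_n) with q_i = (sin θ_i, 0, cos θ_i) ∈ S², −π/4 < θ_1 < ... < θ_n < π/4, satisfying the spherical geodesic central configuration equations Σ_{j≠i} m_i m_j sin(θ_j−θ_i)/sin³(|θ_i−θ_j|) = λ m_i sin(2θ_i) with λ < 0 and m_i > 0. Then the n×n matrix H with H_{ij} = −2 m_i m_j cos(d_{ij})/sin³(d_{ij}) for i ≠ j (d_{ij} = |θ_i − θ_j| < π/2), H_{ii} = 2Σ_{j≠i} m_i m_j cos(d_{ij})/sin³(d_{ij}) − 2λ m_i cos(2θ_i),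 is positive definite. -/
open Real Finset Matrix

/-!
Write `H = D + L`, where `D` is diagonal with entries `-2 λ m_i cos 2θ_i > 0` and `L` is the
Laplacian of the complete graph with weights `w_ij = 2 m_i m_j cos d_ij / sin³ d_ij > 0`
(positive because `0 < d_ij < π/2`). The quadratic form of `L` is `½ Σ w_ij (x_i - x_j)²`, so
`L` is positive semidefinite, and a positive diagonal matrix plus it is positive definite.
-/

variable {ι : Type*} [Fintype ι] [DecidableEq ι]

def weightedLaplacian (w : Matrix ι ι ℝ) : Matrix ι ι ℝ :=
  diagonal (fun i => ∑ j, w i j) - w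

lemma two_mul_dotProduct_weightedLaplacian_mulVec {w : Matrix ι ι ℝ} (hw : w.IsSymm)
    (x : ι → ℝ) :
    2 * (x ⬝ᵥ (weightedLaplacian w *ᵥ x)) = ∑ i, ∑ j, w i j * (x i - x j) ^ 2 := by
  have hswap : ∑ i, ∑ j, w i j * x j ^ 2 = ∑ i, ∑ j, w i j * x i ^ 2 := by
    rw [Finset.sum_comm]
    simp_rw [hw.apply]
  have hexpand : x ⬝ᵥ (weightedLaplacian w *ᵥ x)
      = ∑ i, ∑ j, w i j * x i ^ 2 - ∑ i, ∑ j, w i j * (x i * x j) := by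
    rw [weightedLaplacian, sub_mulVec, dotProduct_sub]
    simp only [dotProduct, mulVec_diagonal, Finset.sum_mul]
    simp only [mulVec, dotProduct, Finset.mul_sum]
    congr 1 <;> refine Finset.sum_congr rfl fun i _ => Finset.sum_congr rfl fun j _ => ?_ <;> ring
  have hsq : ∑ i, ∑ j, w i j * (x i - x j) ^ 2
      = ∑ i, ∑ j, w i j * x i ^ 2 + ∑ i, ∑ j, w i j * x j ^ 2
        - 2 * ∑ i, ∑ j, w i j * (x i * x j) := by
    simp only [Finset.mul_sum, ← Finset.sum_add_distrib, ← Finset.sum_sub_distrib]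
    refine Finset.sum_congr rfl fun i _ => Finset.sum_congr rfl fun j _ => ?_
    ring
  rw [hexpand, hsq, hswap]
  ring

lemma weightedLaplacian_posSemidef {w : Matrix ι ι ℝ} (hw : w.IsSymm)
    (hw_nonneg : ∀ i j, i ≠ j → 0 ≤ w i j) : (weightedLaplacian w).PosSemidef := by
  refine .of_dotProduct_mulVec_nonneg ?_ fun x => ?_
  · rw [IsHermitian, conjTranspose_eq_transpose_of_trivial, weightedLaplacian, transpose_sub,
      diagonal_transpose, hw.eq]
  · have hsum : 0 ≤ ∑ i, ∑ j, w i j * (x i - x j) ^ 2 := by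
      refine Finset.sum_nonneg fun i _ => Finset.sum_nonneg fun j _ => ?_
      rcases eq_or_ne i j with rfl | hij
      · simp
      · exact mul_nonneg (hw_nonneg i j hij) (sq_nonneg _)
    rw [star_trivial]
    linarith [two_mul_dotProduct_weightedLaplacian_mulVec hw x]

lemma cos_div_sin_pow_three_pos {t : ℝ} (h0 : 0 < t) (h1 : t < π / 2) :
    0 < cos t / sin t ^ 3 :=
  div_pos (cos_pos_of_mem_Ioo ⟨by linarith, h1⟩)
    (pow_pos (sin_pos_of_pos_of_lt_pi h0 (by linarith [pi_pos])) 3)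

theorem stmt18_general (n : ℕ)
    (θ : Fin n → ℝ) (hθ : StrictMono θ)
    (hlb : ∀ i, -(Real.pi/4) < θ i) (hub : ∀ i, θ i < Real.pi/4)
    (m : Fin n → ℝ) (hm : ∀ i, 0 < m i)
    (lam : ℝ) (hlam : lam < 0)
    (H : Matrix (Fin n) (Fin n) ℝ)
    (hHoff : ∀ i j, i ≠ j →
      H i j = -2 * m i * m j * Real.cos |θ i - θ j| / (Real.sin |θ i - θ j|)^3)
    (hHdiag : ∀ i, H i i =
      2 * (∑ j ∈ Finset.univ.erase i,
        m i * m j * Real.cos |θ i - θ j| / (Real.sin |θ i - θ j|)^3)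
      - 2 * lam * m i * Real.cos (2 * θ i)) :
    H.PosDef := by
  set w : Matrix (Fin n) (Fin n) ℝ :=
    of fun i j => 2 * m i * m j * (cos |θ i - θ j| / sin |θ i - θ j| ^ 3) with hw
  have hH : H = diagonal (fun i => -2 * lam * m i * cos (2 * θ i)) + weightedLaplacian w := by
    ext i j
    rcases eq_or_ne i j with rfl | hij
    · rw [hHdiag, Matrix.add_apply, weightedLaplacian, Matrix.sub_apply, diagonal_apply_eq,
        diagonal_apply_eq, ← Finset.add_sum_erase _ _ (Finset.mem_univ i), Finset.mul_sum]
      simp only [hw, of_apply, add_sub_cancel_left]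
      ring_nf
    · rw [hHoff i j hij, Matrix.add_apply, weightedLaplacian, Matrix.sub_apply,
        diagonal_apply_ne _ hij, diagonal_apply_ne _ hij]
      simp only [hw, of_apply]
      ring
  rw [hH]
  refine (posDef_diagonal_iff.mpr fun i => ?_).add_posSemidef
    (weightedLaplacian_posSemidef ?_ fun i j hij => ?_)
  · have hcos : 0 < cos (2 * θ i) :=
      cos_pos_of_mem_Ioo ⟨by linarith [hlb i], by linarith [hub i]⟩
    linarith [mul_pos (mul_pos (neg_pos.mpr hlam) (hm i)) hcos]
  · ext i j
    simp only [transpose_apply, hw, of_apply, abs_sub_comm (θ i) (θ j)]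
    ring
  · have hdist : 0 < |θ i - θ j| := abs_pos.mpr (sub_ne_zero.mpr (hθ.injective.ne hij))
    have hdist' : |θ i - θ j| < π / 2 :=
      abs_sub_lt_iff.mpr ⟨by linarith [hlb j, hub i], by linarith [hlb i, hub j]⟩
    exact (mul_pos (mul_pos (mul_pos two_pos (hm i)) (hm j))
      (cos_div_sin_pow_three_pos hdist hdist')).le

theorem stmt18 (n : ℕ)
    (θ : Fin n → ℝ) (hθ : StrictMono θ)
    (hlb : ∀ i, -(Real.pi/4) < θ i) (hub : ∀ i, θ i < Real.pi/4)
    (m : Fin n → ℝ) (hm : ∀ i, 0 < m i)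
    (lam : ℝ) (hlam : lam < 0)
    -- spherical geodesic central configuration equations
    (hcc : ∀ i, ∑ j ∈ Finset.univ.erase i,
        m i * m j * Real.sin (θ j - θ i) / (Real.sin |θ i - θ j|)^3
        = lam * m i * Real.sin (2 * θ i))
    (H : Matrix (Fin n) (Fin n) ℝ)
    (hHoff : ∀ i j, i ≠ j →
      H i j = -2 * m i * m j * Real.cos |θ i - θ j| / (Real.sin |θ i - θ j|)^3)
    (hHdiag : ∀ i, H i i =
      2 * (∑ j ∈ Finset.univ.erase i,
        m i * m j * Real.cos |θ i - θ j| / (Real.sin |θ i - θ j|)^3)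
      - 2 * lam * m i * Real.cos (2 * θ i)) :
    H.PosDef :=
  stmt18_general n θ hθ hlb hub m hm lam hlam H hHoff hHdiag
end

section
/- Let θ_1 < ... < θ_n and masses m_i > 0 be a solution of the geodesic central configuration equations on ℍ¹ with multiplier λ, and let A be the matrix A_{ij} = m_j/sinh³(d_{ij}) (i ≠ j), A_{ii} = −Σ_{j≠i} m_j cosh θ_j/(cosh θ_i sinh³ d_{ij}), where d_{ij} = |θ_i − θ_j|. Let M = diag(m_i), C = diag(cosh θ_i). Then the matrix CMAC is symmetric and the row sums of CMAC are all zero. -/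
open Real Finset Matrix

section DiagonalConjugation

variable {ι α : Type*} [Fintype ι] [DecidableEq ι]

lemma diagonal_mul_diagonal_mul_mul_diagonal_apply [CommSemiring α] (c m : ι → α)
    (A : Matrix ι ι α) (i j : ι) :
    (diagonal c * diagonal m * A * diagonal c) i j = c i * m i * A i j * c j := by
  rw [diagonal_mul_diagonal, mul_diagonal, diagonal_mul]

lemma isSymm_diagonal_mul_diagonal_mul_mul_diagonal [CommSemiring α] (c m : ι → α)
    {A : Matrix ι ι α} (hA : ∀ i j, i ≠ j → m i * A i j = m j * A j i) :
    (diagonal c * diagonal m * A * diagonal c).IsSymm := by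
  ext i j
  rw [transpose_apply, diagonal_mul_diagonal_mul_mul_diagonal_apply,
    diagonal_mul_diagonal_mul_mul_diagonal_apply]
  obtain rfl | hij := eq_or_ne i j
  · rfl
  · calc c j * m j * A j i * c i = c i * (m j * A j i) * c j := by ring
      _ = c i * (m i * A i j) * c j := by rw [hA i j hij]
      _ = c i * m i * A i j * c j := by ring

lemma sum_diagonal_mul_diagonal_mul_mul_diagonal_apply [CommSemiring α] (c m : ι → α)
    (A : Matrix ι ι α) (i : ι) :
    ∑ j, (diagonal c * diagonal m * A * diagonal c) i j = c i * m i * (A *ᵥ c) i := by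
  simp only [diagonal_mul_diagonal_mul_mul_diagonal_apply, mulVec, dotProduct, mul_sum]
  exact sum_congr rfl fun j _ => by ring

lemma mulVec_eq_zero_of_diag_eq [Field α] {c : ι → α} (hc : ∀ i, c i ≠ 0) {A : Matrix ι ι α}
    (hA : ∀ i, A i i = -(∑ j ∈ univ.erase i, A i j * c j) / c i) : A *ᵥ c = 0 := by
  ext i
  rw [mulVec, dotProduct, ← add_sum_erase _ _ (mem_univ i), hA i, Pi.zero_apply,
    div_mul_cancel₀ _ (hc i), neg_add_cancel]

end DiagonalConjugation

theorem stmt19_general (n : ℕ)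
    (θ : Fin n → ℝ)
    (m : Fin n → ℝ)
    (A : Matrix (Fin n) (Fin n) ℝ)
    (hAoff : ∀ i j, i ≠ j → A i j = m j / (Real.sinh |θ i - θ j|)^3)
    (hAdiag : ∀ i, A i i = - ∑ j ∈ Finset.univ.erase i,
        m j * Real.cosh (θ j) / (Real.cosh (θ i) * (Real.sinh |θ i - θ j|)^3))
    (M C : Matrix (Fin n) (Fin n) ℝ)
    (hM : M = Matrix.diagonal m)
    (hC : C = Matrix.diagonal (fun i => Real.cosh (θ i))) :
    (C * M * A * C).IsSymm ∧ ∀ i, ∑ j, (C * M * A * C) i j = 0 := by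
  subst hM hC
  have hAcosh : A *ᵥ (fun i => cosh (θ i)) = 0 := by
    refine mulVec_eq_zero_of_diag_eq (fun i => (cosh_pos _).ne') fun i => ?_
    rw [hAdiag i, neg_div, sum_div]
    congr 1
    refine sum_congr rfl fun j hj => ?_
    rw [hAoff i j (ne_of_mem_erase hj).symm]
    ring
  refine ⟨isSymm_diagonal_mul_diagonal_mul_mul_diagonal _ _ fun i j hij => ?_, fun i => ?_⟩
  · rw [hAoff i j hij, hAoff j i hij.symm, abs_sub_comm]
    ring
  · rw [sum_diagonal_mul_diagonal_mul_mul_diagonal_apply, hAcosh, Pi.zero_apply, mul_zero]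

theorem stmt19 (n : ℕ)
    (θ : Fin n → ℝ) (hθ : StrictMono θ)
    (m : Fin n → ℝ) (hm : ∀ i, 0 < m i) (lam : ℝ)
    -- geodesic central configuration equations on ℍ¹
    (hcc : ∀ i, ∑ j ∈ Finset.univ.erase i,
        m j * Real.sinh (θ j - θ i) / (Real.sinh |θ i - θ j|)^3
        = lam * Real.sinh (2 * θ i))
    (A : Matrix (Fin n) (Fin n) ℝ)
    (hAoff : ∀ i j, i ≠ j → A i j = m j / (Real.sinh |θ i - θ j|)^3)
    (hAdiag : ∀ i, A i i = - ∑ j ∈ Finset.univ.erase i,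
        m j * Real.cosh (θ j) / (Real.cosh (θ i) * (Real.sinh |θ i - θ j|)^3))
    (M C : Matrix (Fin n) (Fin n) ℝ)
    (hM : M = Matrix.diagonal m)
    (hC : C = Matrix.diagonal (fun i => Real.cosh (θ i))) :
    (C * M * A * C).IsSymm ∧ ∀ i, ∑ j, (C * M * A * C) i j = 0 :=
  stmt19_general n θ m A hAoff hAdiag M C hM hC
end
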